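/- arXiv:1808.04159 — 2 statements merged into one kernel-verified Lean document; each statement's English description precedes it below -/
import Mathlib

section
/- Let m ∈ ℕ, s ∈ (m, m+1], and f ∈ 𝒞^s(Ω) with inf_{x∈Ω} |f(x)| ≥ c₀ > 0. Then 1/f ∈ 𝒞^s(Ω), and ‖1/f‖_{𝒞^s(Ω)} ≤ C, where C depends only on m, n, c₀, and an upper bound for ‖f‖_{𝒞^s(Ω)}. -/
open Set Metric ENNReal

noncomputable section

variable {E F : Type*} [NormedAddCommGroup E] [NormedSpace ℝ E]
  [NormedAddCommGroup F] [NormedSpace ℝ F]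

/-- The Hölder norm `‖f‖_{C^{0,s}(Ω)} = sup_Ω ‖f‖ + sup_{x≠y} ‖x-y‖^{-s}‖f x - f y‖`,
valued in `ℝ≥0∞`. -/
noncomputable def holderNorm (s : ℝ) (Ω : Set E) (f : E → F) : ℝ≥0∞ :=
  (⨆ x ∈ Ω, ENNReal.ofReal ‖f x‖) +
    ⨆ (x ∈ Ω) (y ∈ Ω) (_ : x ≠ y), ENNReal.ofReal (‖f x - f y‖ / ‖x - y‖ ^ s)

/-- The second-difference (Zygmund) seminorm
`sup_{h ≠ 0, x, x+h, x+2h ∈ Ω} |h|^{-s} ‖f(x+2h) - 2 f(x+h) + f x‖`. -/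
noncomputable def secondDiff (s : ℝ) (Ω : Set E) (f : E → F) : ℝ≥0∞ :=
  ⨆ (x : E) (h : E) (_ : h ≠ 0) (_ : x ∈ Ω) (_ : x + h ∈ Ω) (_ : x + 2 • h ∈ Ω),
    ENNReal.ofReal (‖f (x + 2 • h) - 2 • f (x + h) + f x‖ / ‖h‖ ^ s)

/-- The Zygmund norm of order `s ∈ (0,1]`:
`‖f‖_{𝒞^s(Ω)} = ‖f‖_{C^{0,s/2}(Ω)} + second difference seminorm`. -/
noncomputable def zygBase (s : ℝ) (Ω : Set E) (f : E → F) : ℝ≥0∞ :=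
  holderNorm (s / 2) Ω f + secondDiff s Ω f

/-- The Hölder norm `‖f‖_{C^{m,s}(Ω)} = Σ_{|α| ≤ m} ‖∂^α f‖_{C^{0,s}(Ω)}`, where
derivatives of order `i` are packaged as the full `i`-th derivative. -/
noncomputable def holderCm (m : ℕ) (s : ℝ) (Ω : Set E) (f : E → F) : ℝ≥0∞ :=
  ∑ i ∈ Finset.range (m + 1), holderNorm s Ω (iteratedFDerivWithin ℝ i f Ω)

/-- The Zygmund norm of order `s > 0`: writing `s = m + σ` with `m ∈ ℕ`, `σ ∈ (0,1]`,
`‖f‖_{𝒞^s(Ω)} = Σ_{|α| ≤ m} ‖∂^α f‖_{𝒞^σ(Ω)}`. -/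
noncomputable def zygNorm (s : ℝ) (Ω : Set E) (f : E → F) : ℝ≥0∞ :=
  ∑ i ∈ Finset.range ⌈s⌉₊, zygBase (s - (⌈s⌉₊ - 1 : ℕ)) Ω (iteratedFDerivWithin ℝ i f Ω)

/-- Membership in the Zygmund space `𝒞^s(Ω)`. -/
def MemZyg (s : ℝ) (Ω : Set E) (f : E → F) : Prop :=
  ContDiffOn ℝ (⌈s⌉₊ - 1 : ℕ) f Ω ∧ zygNorm s Ω f ≠ ⊤

end

/-!
Write `s = m + σ` with `σ ∈ (0, 1]`. Scalar functions whose sup norm, `σ/2`-Hölder constant and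
`σ`-second-difference constant are bounded form an algebra, by the discrete Leibniz rule for
second differences, and `1/u` belongs to it with explicit constants when `u` does and `|u| ≥ c₀`.
By the chain and product rules, every directional derivative `D^i (1/f) (v₁, …, vᵢ)` with
`i ≤ m` and unit vectors `vⱼ` is a polynomial in `1/f` and the directional derivatives of `f`
of order at most `i`, and the shape of this polynomial does not depend on `f`. The algebra
estimates therefore bound its constants by a function of `m`, `c₀` and the bound `M` on `f`
alone, and the operator norm of `D^i (1/f)` is controlled by its values on unit vectors.
-/

section ZygmundAlgebra

variable {E F : Type*} [NormedAddCommGroup E] [NormedAddCommGroup F] {σ K K' : ℝ} {Ω : Set E}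
  {u w : E → F}

theorem rpow_norm_pos {h : E} (hh : h ≠ 0) {t : ℝ} : 0 < ‖h‖ ^ t :=
  Real.rpow_pos_of_pos (norm_pos_iff.2 hh) t

theorem rpow_half_mul_self {a : ℝ} (ha : 0 < a) (σ : ℝ) : a ^ (σ / 2) * a ^ (σ / 2) = a ^ σ := by
  rw [← Real.rpow_add ha, add_halves]

theorem rpow_norm_two_nsmul_le (hσ : 0 ≤ σ) (hσ2 : σ ≤ 2) (h : E) :
    ‖2 • h‖ ^ (σ / 2) ≤ 2 * ‖h‖ ^ (σ / 2) :=
  calc ‖2 • h‖ ^ (σ / 2) ≤ (2 * ‖h‖) ^ (σ / 2) := by gcongr; exact norm_nsmul_le.trans (by simp)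
    _ = 2 ^ (σ / 2) * ‖h‖ ^ (σ / 2) := Real.mul_rpow zero_le_two (norm_nonneg h)
    _ ≤ 2 * ‖h‖ ^ (σ / 2) := by
      gcongr
      exact Real.rpow_le_self_of_one_le one_le_two (by linarith)

structure ZygBounded (σ : ℝ) (Ω : Set E) (K : ℝ) (u : E → F) : Prop where
  norm_le : ∀ x ∈ Ω, ‖u x‖ ≤ K
  norm_sub_le : ∀ x ∈ Ω, ∀ y ∈ Ω, ‖u x - u y‖ ≤ K * ‖x - y‖ ^ (σ / 2)
  norm_secondDiff_le : ∀ x h, h ≠ 0 → x ∈ Ω → x + h ∈ Ω → x + 2 • h ∈ Ω →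
    ‖u (x + 2 • h) - 2 • u (x + h) + u x‖ ≤ K * ‖h‖ ^ σ

namespace ZygBounded

theorem mono (hu : ZygBounded σ Ω K u) (hK : K ≤ K') : ZygBounded σ Ω K' u where
  norm_le x hx := (hu.norm_le x hx).trans hK
  norm_sub_le x hx y hy := (hu.norm_sub_le x hx y hy).trans (by gcongr)
  norm_secondDiff_le x h hh hx hx₁ hx₂ :=
    (hu.norm_secondDiff_le x h hh hx hx₁ hx₂).trans (by gcongr)

theorem congr (hu : ZygBounded σ Ω K u) (huw : EqOn u w Ω) : ZygBounded σ Ω K w where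
  norm_le x hx := huw hx ▸ hu.norm_le x hx
  norm_sub_le x hx y hy := huw hx ▸ huw hy ▸ hu.norm_sub_le x hx y hy
  norm_secondDiff_le x h hh hx hx₁ hx₂ :=
    huw hx ▸ huw hx₁ ▸ huw hx₂ ▸ hu.norm_secondDiff_le x h hh hx hx₁ hx₂

theorem neg (hu : ZygBounded σ Ω K u) : ZygBounded σ Ω K (-u) where
  norm_le x hx := by simpa using hu.norm_le x hx
  norm_sub_le x hx y hy := by
    simpa only [Pi.neg_apply, neg_sub_neg, norm_sub_rev] using hu.norm_sub_le x hx y hy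
  norm_secondDiff_le x h hh hx hx₁ hx₂ := by
    have hneg : (-u) (x + 2 • h) - 2 • (-u) (x + h) + (-u) x =
        -(u (x + 2 • h) - 2 • u (x + h) + u x) := by
      simp only [Pi.neg_apply, smul_neg]; abel
    rw [hneg, norm_neg]
    exact hu.norm_secondDiff_le x h hh hx hx₁ hx₂

theorem add (hu : ZygBounded σ Ω K u) (hw : ZygBounded σ Ω K' w) :
    ZygBounded σ Ω (K + K') (u + w) where
  norm_le x hx := (norm_add_le _ _).trans (add_le_add (hu.norm_le x hx) (hw.norm_le x hx))
  norm_sub_le x hx y hy := by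
    rw [Pi.add_apply, Pi.add_apply, add_sub_add_comm, add_mul]
    exact norm_add_le_of_le (hu.norm_sub_le x hx y hy) (hw.norm_sub_le x hx y hy)
  norm_secondDiff_le x h hh hx hx₁ hx₂ := by
    have hsplit : (u + w) (x + 2 • h) - 2 • (u + w) (x + h) + (u + w) x =
        (u (x + 2 • h) - 2 • u (x + h) + u x) + (w (x + 2 • h) - 2 • w (x + h) + w x) := by
      simp only [Pi.add_apply, smul_add]; abel
    rw [hsplit, add_mul]
    exact norm_add_le_of_le (hu.norm_secondDiff_le x h hh hx hx₁ hx₂)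
      (hw.norm_secondDiff_le x h hh hx hx₁ hx₂)

theorem of_zygBase_le (hu : zygBase σ Ω u ≤ ENNReal.ofReal K) (hK : 0 ≤ K) :
    ZygBounded σ Ω K u := by
  unfold zygBase holderNorm at hu
  have hsup := le_self_add.trans (le_self_add.trans hu)
  have hhol := le_add_self.trans (le_self_add.trans hu)
  have hsd := le_add_self.trans hu
  refine ⟨fun x hx => ?_, fun x hx y hy => ?_, fun x h hh hx hx₁ hx₂ => ?_⟩
  · exact (ENNReal.ofReal_le_ofReal_iff hK).1 ((le_iSup₂ (f := fun x (_ : x ∈ Ω) =>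
      ENNReal.ofReal ‖u x‖) x hx).trans hsup)
  · rcases eq_or_ne x y with rfl | hxy
    · simp only [sub_self, norm_zero]; positivity
    have hle := (le_iSup₂_of_le x hx <| le_iSup₂_of_le y hy <| le_iSup_of_le hxy le_rfl).trans hhol
    rw [ENNReal.ofReal_le_ofReal_iff hK, div_le_iff₀ (rpow_norm_pos (sub_ne_zero.2 hxy))] at hle
    exact hle
  · have hle := (le_iSup_of_le x <| le_iSup_of_le h <| le_iSup_of_le hh <| le_iSup_of_le hx <|
      le_iSup_of_le hx₁ <| le_iSup_of_le hx₂ le_rfl).trans hsd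
    rw [ENNReal.ofReal_le_ofReal_iff hK, div_le_iff₀ (rpow_norm_pos hh)] at hle
    exact hle

theorem zygBase_le (hu : ZygBounded σ Ω K u) (hK : 0 ≤ K) :
    zygBase σ Ω u ≤ ENNReal.ofReal (3 * K) := by
  have hsup : (⨆ x ∈ Ω, ENNReal.ofReal ‖u x‖) ≤ ENNReal.ofReal K :=
    iSup₂_le fun x hx => ENNReal.ofReal_le_ofReal (hu.norm_le x hx)
  have hhol : (⨆ (x ∈ Ω) (y ∈ Ω) (_ : x ≠ y),
      ENNReal.ofReal (‖u x - u y‖ / ‖x - y‖ ^ (σ / 2))) ≤ ENNReal.ofReal K :=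
    iSup₂_le fun x hx => iSup₂_le fun y hy => iSup_le fun hxy => ENNReal.ofReal_le_ofReal <|
      (div_le_iff₀ (rpow_norm_pos (sub_ne_zero.2 hxy))).2 (hu.norm_sub_le x hx y hy)
  have hsd : secondDiff σ Ω u ≤ ENNReal.ofReal K :=
    iSup_le fun x => iSup_le fun h => iSup_le fun hh => iSup_le fun hx => iSup_le fun hx₁ =>
      iSup_le fun hx₂ => ENNReal.ofReal_le_ofReal <|
        (div_le_iff₀ (rpow_norm_pos hh)).2 (hu.norm_secondDiff_le x h hh hx hx₁ hx₂)
  calc zygBase σ Ω u ≤ ENNReal.ofReal K + ENNReal.ofReal K + ENNReal.ofReal K :=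
        add_le_add (add_le_add hsup hhol) hsd
    _ = ENNReal.ofReal (3 * K) := by
        rw [← ENNReal.ofReal_add hK hK, ← ENNReal.ofReal_add (by positivity) hK]; ring_nf

theorem mul {u w : E → ℝ} (hσ : 0 ≤ σ) (hσ2 : σ ≤ 2) (hu : ZygBounded σ Ω K u)
    (hw : ZygBounded σ Ω K' w) (hK : 0 ≤ K) (hK' : 0 ≤ K') :
    ZygBounded σ Ω (8 * K * K') (u * w) := by
  refine ⟨fun x hx => ?_, fun x hx y hy => ?_, fun x h hh hx hx₁ hx₂ => ?_⟩
  · rw [Pi.mul_apply, norm_mul]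
    nlinarith [mul_le_mul (hu.norm_le x hx) (hw.norm_le x hx) (norm_nonneg _) hK,
      mul_nonneg hK hK']
  · set d := ‖x - y‖ ^ (σ / 2)
    have hsplit : (u * w) x - (u * w) y = u x * (w x - w y) + (u x - u y) * w y := by
      simp only [Pi.mul_apply]; ring
    calc ‖(u * w) x - (u * w) y‖ ≤ ‖u x‖ * ‖w x - w y‖ + ‖u x - u y‖ * ‖w y‖ := by
          rw [hsplit, ← norm_mul, ← norm_mul]; exact norm_add_le _ _
      _ ≤ K * (K' * d) + K * d * K' := by
          gcongr
          exacts [hu.norm_le x hx, hw.norm_sub_le x hx y hy, hu.norm_sub_le x hx y hy,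
            hw.norm_le y hy]
      _ ≤ 8 * K * K' * d := by nlinarith [mul_nonneg (mul_nonneg hK hK') (by positivity : 0 ≤ d)]
  · set d := ‖h‖ ^ (σ / 2)
    have hdd : d * d = ‖h‖ ^ σ := rpow_half_mul_self (norm_pos_iff.2 hh) σ
    have hu₂ : ‖u (x + 2 • h) - u x‖ ≤ K * (2 * d) := (hu.norm_sub_le _ hx₂ _ hx).trans <| by
      rw [add_sub_cancel_left]; gcongr; exact rpow_norm_two_nsmul_le hσ hσ2 h
    have hw₂ : ‖w (x + 2 • h) - w x‖ ≤ K' * (2 * d) := (hw.norm_sub_le _ hx₂ _ hx).trans <| by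
      rw [add_sub_cancel_left]; gcongr; exact rpow_norm_two_nsmul_le hσ hσ2 h
    have hu₁ : ‖u (x + h) - u x‖ ≤ K * d := by simpa using hu.norm_sub_le _ hx₁ _ hx
    have hw₁ : ‖w (x + h) - w x‖ ≤ K' * d := by simpa using hw.norm_sub_le _ hx₁ _ hx
    -- discrete Leibniz rule for the second difference
    have hsplit : (u * w) (x + 2 • h) - 2 • (u * w) (x + h) + (u * w) x =
        u x * (w (x + 2 • h) - 2 • w (x + h) + w x) + (u (x + 2 • h) - 2 • u (x + h) + u x) * w x
          + (u (x + 2 • h) - u x) * (w (x + 2 • h) - w x)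
          - 2 * ((u (x + h) - u x) * (w (x + h) - w x)) := by
      simp only [Pi.mul_apply, nsmul_eq_mul]; ring
    calc _ ≤ ‖u x‖ * ‖w (x + 2 • h) - 2 • w (x + h) + w x‖
          + ‖u (x + 2 • h) - 2 • u (x + h) + u x‖ * ‖w x‖
          + ‖u (x + 2 • h) - u x‖ * ‖w (x + 2 • h) - w x‖
          + 2 * (‖u (x + h) - u x‖ * ‖w (x + h) - w x‖) := by
          rw [hsplit]
          refine ((_root_.norm_sub_le _ _).trans (add_le_add norm_add₃_le le_rfl)).trans_eq ?_
          simp only [norm_mul, Real.norm_two]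
      _ ≤ K * (K' * ‖h‖ ^ σ) + K * ‖h‖ ^ σ * K' + K * (2 * d) * (K' * (2 * d))
          + 2 * (K * d * (K' * d)) := by
          gcongr
          exacts [hu.norm_le x hx, hw.norm_secondDiff_le x h hh hx hx₁ hx₂,
            hu.norm_secondDiff_le x h hh hx hx₁ hx₂, hw.norm_le x hx]
      _ = 8 * K * K' * ‖h‖ ^ σ := by rw [← hdd]; ring

theorem inv {u : E → ℝ} {c₀ : ℝ} (hc₀ : 0 < c₀) (hu : ZygBounded σ Ω K u) (hK : 0 ≤ K)
    (hc : ∀ x ∈ Ω, c₀ ≤ |u x|) :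
    ZygBounded σ Ω (1 / c₀ + K / c₀ ^ 2 + 3 * K ^ 2 / c₀ ^ 3) fun x => (u x)⁻¹ := by
  have hc' : ∀ x ∈ Ω, c₀ ≤ ‖u x‖ := hc
  have hne : ∀ x ∈ Ω, u x ≠ 0 := fun x hx => norm_pos_iff.1 (hc₀.trans_le (hc' x hx))
  have hK₀ : 0 ≤ 1 / c₀ := by positivity
  have hK₁ : 0 ≤ K / c₀ ^ 2 := by positivity
  have hK₂ : 0 ≤ 3 * K ^ 2 / c₀ ^ 3 := by positivity
  refine ⟨fun x hx => ?_, fun x hx y hy => ?_, fun x h hh hx hx₁ hx₂ => ?_⟩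
  · calc ‖(u x)⁻¹‖ = ‖u x‖⁻¹ := norm_inv _
      _ ≤ 1 / c₀ := by rw [one_div]; exact inv_anti₀ hc₀ (hc' x hx)
      _ ≤ _ := by linarith
  · set d := ‖x - y‖ ^ (σ / 2)
    have hsplit : (u x)⁻¹ - (u y)⁻¹ = (u y - u x) / (u x * u y) := by
      field_simp [hne x hx, hne y hy]
    calc ‖(u x)⁻¹ - (u y)⁻¹‖ ≤ K * d / (c₀ * c₀) := by
          rw [hsplit, norm_div, norm_mul, norm_sub_rev]
          gcongr
          exacts [hu.norm_sub_le x hx y hy, hc' x hx, hc' y hy]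
      _ = K / c₀ ^ 2 * d := by ring
      _ ≤ _ := by gcongr; linarith
  · set d := ‖h‖ ^ (σ / 2)
    have hdd : d * d = ‖h‖ ^ σ := rpow_half_mul_self (norm_pos_iff.2 hh) σ
    have hu₁ : ‖u (x + h) - u x‖ ≤ K * d := by simpa using hu.norm_sub_le _ hx₁ _ hx
    have hu₂ : ‖u (x + 2 • h) - u (x + h)‖ ≤ K * d := by
      simpa [two_nsmul, ← add_assoc] using hu.norm_sub_le _ hx₂ _ hx₁
    have hsplit : (u (x + 2 • h))⁻¹ - 2 • (u (x + h))⁻¹ + (u x)⁻¹ =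
        (2 * ((u (x + h) - u x) * (u (x + 2 • h) - u (x + h)))
          - u (x + h) * (u (x + 2 • h) - 2 • u (x + h) + u x))
          / (u x * u (x + h) * u (x + 2 • h)) := by
      simp only [nsmul_eq_mul, Nat.cast_ofNat]
      field_simp [hne x hx, hne _ hx₁, hne _ hx₂]
      ring
    calc ‖(u (x + 2 • h))⁻¹ - 2 • (u (x + h))⁻¹ + (u x)⁻¹‖
        ≤ (2 * (K * d * (K * d)) + K * (K * ‖h‖ ^ σ)) / (c₀ * c₀ * c₀) := by
          rw [hsplit, norm_div]
          gcongr
          · refine (_root_.norm_sub_le _ _).trans ?_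
            simp only [norm_mul, Real.norm_two]
            gcongr
            exacts [hu.norm_le _ hx₁, hu.norm_secondDiff_le x h hh hx hx₁ hx₂]
          · simp only [norm_mul]
            gcongr <;> apply hc' <;> assumption
      _ = 3 * K ^ 2 / c₀ ^ 3 * ‖h‖ ^ σ := by rw [← hdd]; ring
      _ ≤ _ := by gcongr; linarith

end ZygBounded

end ZygmundAlgebra

section Multilinear

variable {E F : Type*} [NormedAddCommGroup E] [NormedAddCommGroup F] [NormedSpace ℝ F]
  {ι : Type*} [Fintype ι] {M : ι → Type*} [∀ i, NormedAddCommGroup (M i)]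
  [∀ i, NormedSpace ℝ (M i)] {σ K : ℝ} {Ω : Set E} {T : E → ContinuousMultilinearMap ℝ M F}

theorem ContinuousMultilinearMap.opNorm_le_of_unit_norm {g : ContinuousMultilinearMap ℝ M F}
    {C : ℝ} (hC : 0 ≤ C) (hg : ∀ v : ∀ i, M i, (∀ i, ‖v i‖ = 1) → ‖g v‖ ≤ C) : ‖g‖ ≤ C := by
  refine g.opNorm_le_bound hC fun v => ?_
  by_cases! hv : ∃ i, v i = 0
  · obtain ⟨i, hi⟩ := hv
    rw [g.map_coord_zero i hi, norm_zero]
    positivity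
  have hnorm : ∀ i, ‖v i‖ ≠ 0 := fun i => norm_ne_zero_iff.2 (hv i)
  have hunit : ∀ i, ‖‖v i‖⁻¹ • v i‖ = 1 := fun i => by
    rw [norm_smul, norm_inv, norm_norm, inv_mul_cancel₀ (hnorm i)]
  calc ‖g v‖ = ‖g fun i => ‖v i‖ • ‖v i‖⁻¹ • v i‖ := by simp only [smul_inv_smul₀ (hnorm _)]
    _ = (∏ i, ‖v i‖) * ‖g fun i => ‖v i‖⁻¹ • v i‖ := by
      rw [g.map_smul_univ, norm_smul, Real.norm_of_nonneg (by positivity)]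
    _ ≤ C * ∏ i, ‖v i‖ := by rw [mul_comm]; gcongr; exact hg _ hunit

namespace ZygBounded

theorem apply (hT : ZygBounded σ Ω K T) {v : ∀ i, M i} (hv : ∀ i, ‖v i‖ ≤ 1) :
    ZygBounded σ Ω K fun x => T x v := by
  have hle (S : ContinuousMultilinearMap ℝ M F) : ‖S v‖ ≤ ‖S‖ :=
    S.unit_le_opNorm ((pi_norm_le_iff_of_nonneg zero_le_one).2 hv)
  refine ⟨fun x hx => (hle _).trans (hT.norm_le x hx), fun x hx y hy => ?_,
    fun x h hh hx hx₁ hx₂ => ?_⟩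
  · exact (hle (T x - T y)).trans (hT.norm_sub_le x hx y hy)
  · exact (hle (T (x + 2 • h) - 2 • T (x + h) + T x)).trans
      (hT.norm_secondDiff_le x h hh hx hx₁ hx₂)

theorem of_apply (hK : 0 ≤ K)
    (hT : ∀ v : ∀ i, M i, (∀ i, ‖v i‖ = 1) → ZygBounded σ Ω K fun x => T x v) :
    ZygBounded σ Ω K T := by
  refine ⟨fun x hx => ?_, fun x hx y hy => ?_, fun x h hh hx hx₁ hx₂ => ?_⟩
  · exact ContinuousMultilinearMap.opNorm_le_of_unit_norm hK fun v hv => (hT v hv).norm_le x hx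
  · exact ContinuousMultilinearMap.opNorm_le_of_unit_norm (by positivity) fun v hv =>
      (hT v hv).norm_sub_le x hx y hy
  · exact ContinuousMultilinearMap.opNorm_le_of_unit_norm (by positivity) fun v hv =>
      (hT v hv).norm_secondDiff_le x h hh hx hx₁ hx₂

end ZygBounded

end Multilinear

section ZygNorm

variable {E F : Type*} [NormedAddCommGroup E] [NormedSpace ℝ E] [NormedAddCommGroup F]
  [NormedSpace ℝ F] {Ω : Set E} {u : E → F} {m : ℕ} {s : ℝ}

theorem natCeil_eq_of_lt_of_le (hms : (m : ℝ) < s) (hsm : s ≤ m + 1) : ⌈s⌉₊ = m + 1 :=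
  (Nat.ceil_eq_iff m.succ_ne_zero).2 ⟨by simpa using hms, by exact_mod_cast hsm⟩

theorem zygNorm_eq_sum_zygBase (hms : (m : ℝ) < s) (hsm : s ≤ m + 1) :
    zygNorm s Ω u =
      ∑ i ∈ Finset.range (m + 1), zygBase (s - m) Ω (iteratedFDerivWithin ℝ i u Ω) := by
  rw [zygNorm, natCeil_eq_of_lt_of_le hms hsm, Nat.add_sub_cancel]

theorem zygBounded_iteratedFDerivWithin_of_zygNorm_le (hms : (m : ℝ) < s) (hsm : s ≤ m + 1)
    {K : ℝ} (hu : zygNorm s Ω u ≤ ENNReal.ofReal K) (hK : 0 ≤ K) {i : ℕ} (hi : i ≤ m) :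
    ZygBounded (s - m) Ω K (iteratedFDerivWithin ℝ i u Ω) := by
  rw [zygNorm_eq_sum_zygBase hms hsm] at hu
  exact ZygBounded.of_zygBase_le ((Finset.single_le_sum (fun _ _ => zero_le)
    (Finset.mem_range.2 (Nat.lt_succ_of_le hi))).trans hu) hK

theorem zygNorm_le_sum (hms : (m : ℝ) < s) (hsm : s ≤ m + 1) {K : ℕ → ℝ}
    (hu : ∀ i ≤ m, ZygBounded (s - m) Ω (K i) (iteratedFDerivWithin ℝ i u Ω))
    (hK : ∀ i ≤ m, 0 ≤ K i) :
    zygNorm s Ω u ≤ ∑ i ∈ Finset.range (m + 1), ENNReal.ofReal (3 * K i) := by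
  rw [zygNorm_eq_sum_zygBase hms hsm]
  refine Finset.sum_le_sum fun i hi => ?_
  have hi : i ≤ m := Nat.lt_succ_iff.1 (Finset.mem_range.1 hi)
  exact (hu i hi).zygBase_le (hK i hi)

end ZygNorm

section Calculus

variable {𝕜 E F : Type*} [NontriviallyNormedField 𝕜] [NormedAddCommGroup E] [NormedSpace 𝕜 E]
  [NormedAddCommGroup F] [NormedSpace 𝕜 F] {s : Set E} {x : E}

theorem iteratedFDerivWithin_succ_apply_eq_fderivWithin_apply {g : E → F} {n : ℕ}
    (hxs : UniqueDiffWithinAt 𝕜 s x)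
    (hg : DifferentiableWithinAt 𝕜 (iteratedFDerivWithin 𝕜 n g s) s x) (v : Fin (n + 1) → E) :
    iteratedFDerivWithin 𝕜 (n + 1) g s x v =
      fderivWithin 𝕜 (fun y => iteratedFDerivWithin 𝕜 n g s y (Fin.tail v)) s x (v 0) := by
  rw [iteratedFDerivWithin_succ_apply_left,
    fderivWithin_continuousMultilinear_apply_const_apply hxs hg]

theorem fderivWithin_inv_apply {g : E → 𝕜} (hxs : UniqueDiffWithinAt 𝕜 s x)
    (hg : DifferentiableWithinAt 𝕜 g s x) (hx : g x ≠ 0) (v : E) :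
    fderivWithin 𝕜 (fun y => (g y)⁻¹) s x v = -((g x)⁻¹ * ((g x)⁻¹ * fderivWithin 𝕜 g s x v)) := by
  have h := ((hasFDerivAt_inv hx).comp_hasFDerivWithinAt x hg.hasFDerivWithinAt).fderivWithin hxs
  rw [Function.comp_def] at h
  rw [h]
  simp only [ContinuousLinearMap.comp_apply, ContinuousLinearMap.toSpanSingleton_apply, smul_eq_mul]
  field_simp

end Calculus

section InvDerivPoly

variable {E : Type*} [NormedAddCommGroup E] [NormedSpace ℝ E]

/-- `φ` is a polynomial in `f⁻¹` and the directional derivatives of `f` of order at most `k`;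
`K` bounds its Zygmund constants in terms of a bound `A` for those of the generators, following
`ZygBounded.add` and `ZygBounded.mul`. -/
inductive InvDerivPoly (f : E → ℝ) (Ω : Set E) (A : ℝ) : ℕ → ℝ → (E → ℝ) → Prop
  | iteratedFDerivWithin_apply {k j : ℕ} (hjk : j ≤ k) {v : Fin j → E} (hv : ∀ i, ‖v i‖ ≤ 1) :
      InvDerivPoly f Ω A k A fun x => iteratedFDerivWithin ℝ j f Ω x v
  | inv {k : ℕ} : InvDerivPoly f Ω A k A fun x => (f x)⁻¹
  | neg {k : ℕ} {K : ℝ} {φ : E → ℝ} : InvDerivPoly f Ω A k K φ → InvDerivPoly f Ω A k K (-φ)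
  | add {k : ℕ} {K K' : ℝ} {φ ψ : E → ℝ} :
      InvDerivPoly f Ω A k K φ → InvDerivPoly f Ω A k K' ψ → InvDerivPoly f Ω A k (K + K') (φ + ψ)
  | mul {k : ℕ} {K K' : ℝ} {φ ψ : E → ℝ} :
      InvDerivPoly f Ω A k K φ → InvDerivPoly f Ω A k K' ψ →
        InvDerivPoly f Ω A k (8 * K * K') (φ * ψ)
  | mono {k : ℕ} {K K' : ℝ} {φ : E → ℝ} :
      InvDerivPoly f Ω A k K φ → K ≤ K' → InvDerivPoly f Ω A k K' φ

namespace InvDerivPoly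

variable {f : E → ℝ} {Ω : Set E} {A K σ : ℝ} {k m : ℕ} {φ : E → ℝ}

theorem one_le (hA : 1 ≤ A) (hφ : InvDerivPoly f Ω A k K φ) : 1 ≤ K := by
  induction hφ with
  | iteratedFDerivWithin_apply | inv => exact hA
  | neg _ ih => exact ih
  | add _ _ ih ih' => linarith
  | mul _ _ ih ih' => nlinarith
  | mono _ hKK' ih => exact ih.trans hKK'

theorem order_mono (hφ : InvDerivPoly f Ω A k K φ) {k' : ℕ} (hkk' : k ≤ k') :
    InvDerivPoly f Ω A k' K φ := by
  induction hφ with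
  | iteratedFDerivWithin_apply hjk hv => exact iteratedFDerivWithin_apply (hjk.trans hkk') hv
  | inv => exact inv
  | neg _ ih => exact ih.neg
  | add _ _ ih ih' => exact ih.add ih'
  | mul _ _ ih ih' => exact ih.mul ih'
  | mono _ hKK' ih => exact ih.mono hKK'

theorem zygBounded (hσ : 0 ≤ σ) (hσ2 : σ ≤ 2) (hA : 1 ≤ A)
    (hf : ∀ j ≤ m, ZygBounded σ Ω A (iteratedFDerivWithin ℝ j f Ω))
    (hinv : ZygBounded σ Ω A fun x => (f x)⁻¹) (hφ : InvDerivPoly f Ω A k K φ) (hk : k ≤ m) :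
    ZygBounded σ Ω K φ := by
  induction hφ with
  | iteratedFDerivWithin_apply hjk hv => exact (hf _ (hjk.trans hk)).apply hv
  | inv => exact hinv
  | neg _ ih => exact ih.neg
  | add _ _ ih ih' => exact ih.add ih'
  | mul hφ hψ ih ih' =>
    exact ih.mul hσ hσ2 ih' (zero_le_one.trans (hφ.one_le hA))
      (zero_le_one.trans (hψ.one_le hA))
  | mono _ hKK' ih => exact ih.mono hKK'

theorem differentiableOn (hΩ : UniqueDiffOn ℝ Ω) (hf : ContDiffOn ℝ m f Ω)
    (hf0 : ∀ x ∈ Ω, f x ≠ 0) (hφ : InvDerivPoly f Ω A k K φ) (hk : k < m) :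
    DifferentiableOn ℝ φ Ω := by
  induction hφ with
  | iteratedFDerivWithin_apply hjk =>
    exact (hf.differentiableOn_iteratedFDerivWithin (by exact_mod_cast hjk.trans_lt hk)
      hΩ).continuousMultilinear_apply_const _
  | inv => exact (hf.differentiableOn (by exact_mod_cast (Nat.zero_lt_of_lt hk).ne')).inv hf0
  | neg _ ih => exact ih.neg
  | add _ _ ih ih' => exact ih.add ih'
  | mul _ _ ih ih' => exact ih.mul ih'
  | mono _ _ ih => exact ih

theorem exists_fderivWithin_apply_eqOn (hΩ : UniqueDiffOn ℝ Ω) (hf : ContDiffOn ℝ m f Ω)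
    (hf0 : ∀ x ∈ Ω, f x ≠ 0) (hA : 1 ≤ A) {v : E} (hv : ‖v‖ ≤ 1)
    (hφ : InvDerivPoly f Ω A k K φ) (hk : k < m) :
    ∃ ψ, InvDerivPoly f Ω A (k + 1) (64 * A * K ^ 2) ψ ∧
      EqOn (fun x => fderivWithin ℝ φ Ω x v) ψ Ω := by
  induction hφ with
  | @iteratedFDerivWithin_apply j hjk w hw =>
    refine ⟨fun x => iteratedFDerivWithin ℝ (j + 1) f Ω x (Fin.cons v w),
      (iteratedFDerivWithin_apply (by omega) (Fin.cases hv hw)).mono (by nlinarith),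
      fun x hx => ?_⟩
    dsimp only
    rw [iteratedFDerivWithin_succ_apply_eq_fderivWithin_apply (hΩ x hx)
      (hf.differentiableOn_iteratedFDerivWithin (by exact_mod_cast hjk.trans_lt hk) hΩ x hx)]
    simp only [Fin.tail_cons, Fin.cons_zero]
  | inv =>
    have hf1 : DifferentiableOn ℝ f Ω :=
      hf.differentiableOn (by exact_mod_cast (Nat.zero_lt_of_lt hk).ne')
    refine ⟨-((fun x => (f x)⁻¹) * ((fun x => (f x)⁻¹) *
        fun x => iteratedFDerivWithin ℝ 1 f Ω x fun _ => v)),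
      (inv.mul (inv.mul (iteratedFDerivWithin_apply (by omega) fun _ => hv))).neg.mono
        (le_of_eq (by ring)), fun x hx => ?_⟩
    simp only [fderivWithin_inv_apply (hΩ x hx) (hf1 x hx) (hf0 x hx),
      iteratedFDerivWithin_one_apply (hΩ x hx), Pi.neg_apply, Pi.mul_apply]
  | neg _ ih =>
    obtain ⟨ψ, hψ, heq⟩ := ih
    exact ⟨-ψ, hψ.neg, fun x hx => by simp [fderivWithin_neg (hΩ x hx), heq hx]⟩
  | add hφ hφ' ih ih' =>
    obtain ⟨ψ, hψ, heq⟩ := ih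
    obtain ⟨ψ', hψ', heq'⟩ := ih'
    refine ⟨ψ + ψ', (hψ.add hψ').mono ?_, fun x hx => ?_⟩
    · have := mul_nonneg (mul_nonneg (zero_le_one.trans hA) (zero_le_one.trans (hφ.one_le hA)))
        (zero_le_one.trans (hφ'.one_le hA))
      nlinarith
    · simp [fderivWithin_add (hΩ x hx) (hφ.differentiableOn hΩ hf hf0 hk x hx)
        (hφ'.differentiableOn hΩ hf hf0 hk x hx), heq hx, heq' hx]
  | @mul K₁ K₂ φ₁ φ₂ hφ₁ hφ₂ ih₁ ih₂ =>
    obtain ⟨ψ₁, hψ₁, heq₁⟩ := ih₁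
    obtain ⟨ψ₂, hψ₂, heq₂⟩ := ih₂
    refine ⟨φ₁ * ψ₂ + φ₂ * ψ₁, (((hφ₁.order_mono k.le_succ).mul hψ₂).add
      ((hφ₂.order_mono k.le_succ).mul hψ₁)).mono ?_, fun x hx => ?_⟩
    · have hK₁ := hφ₁.one_le hA
      have hK₂ := hφ₂.one_le hA
      have hsum : K₁ + K₂ ≤ 8 * K₁ * K₂ := by nlinarith
      have hAK : 0 ≤ A * K₁ * K₂ := by positivity
      nlinarith [mul_le_mul_of_nonneg_left hsum hAK]
    · simp [fderivWithin_mul (hΩ x hx) (hφ₁.differentiableOn hΩ hf hf0 hk x hx)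
        (hφ₂.differentiableOn hΩ hf hf0 hk x hx), heq₁ hx, heq₂ hx]
  | mono hφ hKK' ih =>
    obtain ⟨ψ, hψ, heq⟩ := ih
    exact ⟨ψ, hψ.mono (by have := hφ.one_le hA; gcongr), heq⟩

end InvDerivPoly

def invDerivBound (A : ℝ) : ℕ → ℝ
  | 0 => A
  | i + 1 => 64 * A * invDerivBound A i ^ 2

theorem invDerivBound_nonneg {A : ℝ} (hA : 0 ≤ A) : ∀ i, 0 ≤ invDerivBound A i
  | 0 => hA
  | i + 1 => by unfold invDerivBound; positivity

variable {f : E → ℝ} {Ω : Set E} {A σ : ℝ} {m : ℕ}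

theorem exists_invDerivPoly_eqOn_iteratedFDerivWithin_inv (hΩ : UniqueDiffOn ℝ Ω)
    (hf : ContDiffOn ℝ m f Ω) (hf0 : ∀ x ∈ Ω, f x ≠ 0) (hA : 1 ≤ A) {i : ℕ} (hi : i ≤ m)
    {v : Fin i → E} (hv : ∀ j, ‖v j‖ ≤ 1) :
    ∃ φ, InvDerivPoly f Ω A i (invDerivBound A i) φ ∧
      EqOn (fun x => iteratedFDerivWithin ℝ i (fun y => (f y)⁻¹) Ω x v) φ Ω := by
  induction i with
  | zero => exact ⟨_, .inv, fun _ _ => rfl⟩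
  | succ i ih =>
    obtain ⟨φ, hφ, heq⟩ := ih (by omega) (v := Fin.tail v) fun j => hv j.succ
    obtain ⟨ψ, hψ, hψeq⟩ := hφ.exists_fderivWithin_apply_eqOn hΩ hf hf0 hA (hv 0) (by omega)
    refine ⟨ψ, hψ, fun x hx => ?_⟩
    have hdiff : DifferentiableWithinAt ℝ (iteratedFDerivWithin ℝ i (fun y => (f y)⁻¹) Ω) Ω x :=
      (hf.inv hf0).differentiableOn_iteratedFDerivWithin (by exact_mod_cast hi) hΩ x hx
    dsimp only
    rw [iteratedFDerivWithin_succ_apply_eq_fderivWithin_apply (hΩ x hx) hdiff,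
      fderivWithin_congr heq (heq hx)]
    exact hψeq hx

theorem zygBounded_iteratedFDerivWithin_inv (hΩ : UniqueDiffOn ℝ Ω) (hf : ContDiffOn ℝ m f Ω)
    (hf0 : ∀ x ∈ Ω, f x ≠ 0) (hσ : 0 ≤ σ) (hσ2 : σ ≤ 2) (hA : 1 ≤ A)
    (hfA : ∀ j ≤ m, ZygBounded σ Ω A (iteratedFDerivWithin ℝ j f Ω))
    (hinv : ZygBounded σ Ω A fun x => (f x)⁻¹) {i : ℕ} (hi : i ≤ m) :
    ZygBounded σ Ω (invDerivBound A i) (iteratedFDerivWithin ℝ i (fun x => (f x)⁻¹) Ω) :=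
  ZygBounded.of_apply (invDerivBound_nonneg (zero_le_one.trans hA) i) fun _ hv => by
    obtain ⟨φ, hφ, heq⟩ :=
      exists_invDerivPoly_eqOn_iteratedFDerivWithin_inv hΩ hf hf0 hA hi fun j => (hv j).le
    exact (hφ.zygBounded hσ hσ2 hA hfA hinv hi).congr heq.symm

end InvDerivPoly

/-- For `m ∈ ℕ`, `s ∈ (m, m+1]`, and `f ∈ 𝒞^s(Ω)` with `inf_Ω |f| ≥ c₀ > 0`,
we have `1/f ∈ 𝒞^s(Ω)` with `‖1/f‖_{𝒞^s(Ω)} ≤ C`, where `C` depends only on `m`, `n`, `c₀`,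
and an upper bound `M` for `‖f‖_{𝒞^s(Ω)}`. -/
theorem zygmund_inverse (n m : ℕ) (c₀ M : ℝ) (hc₀ : 0 < c₀) :
    ∃ C : ℝ≥0∞, C < ⊤ ∧
      ∀ s : ℝ, (m : ℝ) < s → s ≤ m + 1 →
        ∀ Ω : Set (EuclideanSpace ℝ (Fin n)),
          IsOpen Ω → Bornology.IsBounded Ω → IsConnected Ω →
            ∀ f : EuclideanSpace ℝ (Fin n) → ℝ,
              MemZyg s Ω f → zygNorm s Ω f ≤ ENNReal.ofReal M →
              (∀ x ∈ Ω, c₀ ≤ |f x|) →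
                MemZyg s Ω (fun x => (f x)⁻¹) ∧
                  zygNorm s Ω (fun x => (f x)⁻¹) ≤ C := by
  set M' := max M 1
  have hM' : 0 ≤ M' := zero_le_one.trans (le_max_right M 1)
  set B := 1 / c₀ + M' / c₀ ^ 2 + 3 * M' ^ 2 / c₀ ^ 3
  have hB : 0 ≤ B := by positivity
  set A := M' + B
  have hA : 1 ≤ A := (le_max_right M 1).trans (le_add_of_nonneg_right hB)
  refine ⟨∑ i ∈ Finset.range (m + 1), ENNReal.ofReal (3 * invDerivBound A i),
    ENNReal.sum_lt_top.2 fun _ _ => ENNReal.ofReal_lt_top, ?_⟩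
  intro s hms hsm Ω hΩ _ _ f hf hfM hc
  have hm : ⌈s⌉₊ - 1 = m := by rw [natCeil_eq_of_lt_of_le hms hsm, Nat.add_sub_cancel]
  have hfm : ContDiffOn ℝ m f Ω := hm ▸ hf.1
  have hf0 : ∀ x ∈ Ω, f x ≠ 0 := fun x hx => abs_pos.1 (hc₀.trans_le (hc x hx))
  have hfM' : ∀ j ≤ m, ZygBounded (s - m) Ω M' (iteratedFDerivWithin ℝ j f Ω) := fun j hj =>
    zygBounded_iteratedFDerivWithin_of_zygNorm_le hms hsm
      (hfM.trans (ENNReal.ofReal_le_ofReal (le_max_left M 1))) hM' hj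
  have hinv : ZygBounded (s - m) Ω A fun x => (f x)⁻¹ :=
    (((hfM' 0 m.zero_le).apply (v := Fin.elim0) finZeroElim).inv hc₀ hM' hc).mono
      (le_add_of_nonneg_left hM')
  have hbound := zygNorm_le_sum hms hsm (fun i hi => zygBounded_iteratedFDerivWithin_inv
      hΩ.uniqueDiffOn hfm hf0 (by linarith) (by linarith) hA
      (fun j hj => (hfM' j hj).mono (le_add_of_nonneg_right hB)) hinv hi)
    fun i _ => invDerivBound_nonneg (zero_le_one.trans hA) i
  refine ⟨⟨hm ▸ hfm.inv hf0, ?_⟩, hbound⟩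
  exact ne_top_of_le_ne_top (ENNReal.sum_ne_top.2 fun _ _ => ENNReal.ofReal_ne_top) hbound
end

section
/- Let m ∈ ℕ with m ≥ 1, s ∈ (0,1], η₁ > 0, and f ∈ 𝒞^{m+s}(B^n(η₁)) with f(0) = 0. For γ ∈ (0, min{η₁/5, 1}], define f_γ(t) := f(γt) on B^n(5). Then ‖f_γ‖_{𝒞^{m+s}(B^n(5))} ≤ 91 γ ‖f‖_{𝒞^{m+s}(B^n(η₁))}. -/
open Set Metric ENNReal

/-!
By the chain rule, `D^i f_γ (t) = γ^i D^i f (γ t)`. For `γ ≤ 1` the sup, Hölder and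
second-difference parts of the norm of such a rescaled function are at most `γ^i` times those
of `D^i f`, which is `≤ γ` as soon as `i ≥ 1`. The term `i = 0` is controlled differently:
`f_γ` vanishes at `0` and is Lipschitz on `B(5)` with constant `γ sup ‖Df‖ ≤ γ ‖f‖`, and on a
ball of diameter `10` this bounds each of its three parts, giving `35 γ ‖f‖` in total.
-/

section RealInequalities

theorem div_rpow_le_div_mul_rpow {a r γ σ : ℝ} (ha : 0 ≤ a) (hr : 0 < r) (hγ0 : 0 < γ)
    (hγ1 : γ ≤ 1) (hσ : 0 ≤ σ) : a / r ^ σ ≤ a / (γ * r) ^ σ :=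
  div_le_div_of_nonneg_left ha (by positivity)
    (Real.rpow_le_rpow (by positivity) (mul_le_of_le_one_left hr.le hγ1) hσ)

theorem div_rpow_le_of_le_mul {a L r d σ : ℝ} (hL : 0 ≤ L) (ha : a ≤ L * r) (hr : 0 < r)
    (hrd : r ≤ d) (hd : 1 ≤ d) (hσ0 : 0 ≤ σ) (hσ1 : σ ≤ 1) : a / r ^ σ ≤ L * d :=
  calc a / r ^ σ ≤ L * r / r ^ σ := div_le_div_of_nonneg_right ha (by positivity)
    _ = L * r ^ (1 - σ) := by rw [Real.rpow_sub hr, Real.rpow_one, mul_div_assoc]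
    _ ≤ L * d := by
      refine mul_le_mul_of_nonneg_left ?_ hL
      calc r ^ (1 - σ) ≤ d ^ (1 - σ) := Real.rpow_le_rpow hr.le hrd (by linarith)
        _ ≤ d ^ (1 : ℝ) := Real.rpow_le_rpow_of_exponent_le hd (by linarith)
        _ = d := Real.rpow_one d

end RealInequalities

section Scaling

variable {E F : Type*} [NormedAddCommGroup E] [NormedSpace ℝ E]
  [NormedAddCommGroup F] [NormedSpace ℝ F]

theorem ContinuousMultilinearMap.compContinuousLinearMap_smul_id {i : ℕ} (γ : ℝ)
    (A : ContinuousMultilinearMap ℝ (fun _ : Fin i => E) F) :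
    A.compContinuousLinearMap (fun _ => γ • ContinuousLinearMap.id ℝ E) = γ ^ i • A := by
  ext v
  simp only [compContinuousLinearMap_apply, smul_apply,
    ContinuousLinearMap.id_apply, A.map_smul_univ, Finset.prod_const, Finset.card_univ,
    Fintype.card_fin]

theorem iteratedFDerivWithin_comp_smul {f : E → F} {U V : Set E} (hU : IsOpen U)
    (hV : IsOpen V) {γ : ℝ} (hUV : MapsTo (γ • ·) U V) {N : ℕ∞} (hf : ContDiffOn ℝ N f V)
    {i : ℕ} (hi : i ≤ N) {x : E} (hx : x ∈ U) :
    iteratedFDerivWithin ℝ i (fun t => f (γ • t)) U x =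
      γ ^ i • iteratedFDerivWithin ℝ i f V (γ • x) := by
  set g : E →L[ℝ] E := γ • ContinuousLinearMap.id ℝ E
  have hgV : IsOpen (g ⁻¹' V) := hV.preimage g.continuous
  have hxg : x ∈ g ⁻¹' V := hUV hx
  rw [iteratedFDerivWithin_of_isOpen i hU hx, ← iteratedFDerivWithin_of_isOpen i hgV hxg]
  exact (g.iteratedFDerivWithin_comp_right hf hV.uniqueDiffOn hgV.uniqueDiffOn hxg
    (by exact_mod_cast hi)).trans (ContinuousMultilinearMap.compContinuousLinearMap_smul_id γ _)

end Scaling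

section ZygBaseScaling

variable {E F : Type*} [NormedAddCommGroup E] [NormedSpace ℝ E]
  [NormedAddCommGroup F] [NormedSpace ℝ F]
  {U V : Set E} {G g : E → F} {c γ : ℝ}

theorem iSup_norm_le_of_eq_smul_comp_smul (hc : 0 ≤ c) (hUV : MapsTo (γ • ·) U V)
    (hG : ∀ x ∈ U, G x = c • g (γ • x)) :
    ⨆ x ∈ U, ENNReal.ofReal ‖G x‖ ≤ ENNReal.ofReal c * ⨆ x ∈ V, ENNReal.ofReal ‖g x‖ := by
  refine iSup₂_le fun x hx => ?_
  rw [hG x hx, norm_smul, Real.norm_of_nonneg hc, ENNReal.ofReal_mul hc]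
  exact mul_le_mul_right (le_iSup₂ (f := fun y (_ : y ∈ V) => ENNReal.ofReal ‖g y‖) _ (hUV hx)) _

theorem holderNorm_le_of_eq_smul_comp_smul {σ : ℝ} (hc : 0 ≤ c) (hγ0 : 0 < γ) (hγ1 : γ ≤ 1)
    (hσ : 0 ≤ σ) (hUV : MapsTo (γ • ·) U V) (hG : ∀ x ∈ U, G x = c • g (γ • x)) :
    holderNorm σ U G ≤ ENNReal.ofReal c * holderNorm σ V g := by
  rw [holderNorm, holderNorm, mul_add]
  refine add_le_add (iSup_norm_le_of_eq_smul_comp_smul hc hUV hG) ?_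
  simp only [iSup_le_iff]
  intro x hx y hy hxy
  have hxy' : γ • x ≠ γ • y := fun h => hxy (smul_right_injective E hγ0.ne' h)
  have hquot : ‖G x - G y‖ / ‖x - y‖ ^ σ ≤
      c * (‖g (γ • x) - g (γ • y)‖ / ‖γ • x - γ • y‖ ^ σ) := by
    rw [hG x hx, hG y hy, ← smul_sub, ← smul_sub, norm_smul, norm_smul, Real.norm_of_nonneg hc,
      Real.norm_of_nonneg hγ0.le, mul_div_assoc]
    exact mul_le_mul_of_nonneg_left (div_rpow_le_div_mul_rpow (norm_nonneg _)
      (norm_sub_pos_iff.2 hxy) hγ0 hγ1 hσ) hc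
  calc ENNReal.ofReal (‖G x - G y‖ / ‖x - y‖ ^ σ)
      ≤ ENNReal.ofReal c * ENNReal.ofReal (‖g (γ • x) - g (γ • y)‖ / ‖γ • x - γ • y‖ ^ σ) := by
        rw [← ENNReal.ofReal_mul hc]; exact ENNReal.ofReal_le_ofReal hquot
    _ ≤ _ := mul_le_mul_right (le_iSup_of_le (γ • x) <| le_iSup_of_le (hUV hx) <|
        le_iSup_of_le (γ • y) <| le_iSup_of_le (hUV hy) <|
          le_iSup (fun _ : γ • x ≠ γ • y => _) hxy') _

theorem secondDiff_le_of_eq_smul_comp_smul {s : ℝ} (hc : 0 ≤ c) (hγ0 : 0 < γ) (hγ1 : γ ≤ 1)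
    (hs : 0 ≤ s) (hUV : MapsTo (γ • ·) U V) (hG : ∀ x ∈ U, G x = c • g (γ • x)) :
    secondDiff s U G ≤ ENNReal.ofReal c * secondDiff s V g := by
  rw [secondDiff, secondDiff]
  simp only [iSup_le_iff]
  intro x h hh hx hxh hx2h
  have hadd : γ • (x + h) = γ • x + γ • h := smul_add γ x h
  have hadd₂ : γ • (x + 2 • h) = γ • x + 2 • γ • h := by rw [smul_add, smul_comm]
  have hquot : ‖G (x + 2 • h) - 2 • G (x + h) + G x‖ / ‖h‖ ^ s ≤
      c * (‖g (γ • x + 2 • γ • h) - 2 • g (γ • x + γ • h) + g (γ • x)‖ / ‖γ • h‖ ^ s) := by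
    rw [hG _ hx2h, hG _ hxh, hG _ hx, hadd, hadd₂, smul_comm (2 : ℕ) c, ← smul_sub, ← smul_add,
      norm_smul, norm_smul γ h, Real.norm_of_nonneg hc, Real.norm_of_nonneg hγ0.le, mul_div_assoc]
    exact mul_le_mul_of_nonneg_left (div_rpow_le_div_mul_rpow (norm_nonneg _)
      (norm_pos_iff.2 hh) hγ0 hγ1 hs) hc
  calc ENNReal.ofReal (‖G (x + 2 • h) - 2 • G (x + h) + G x‖ / ‖h‖ ^ s)
      ≤ ENNReal.ofReal c * ENNReal.ofReal
          (‖g (γ • x + 2 • γ • h) - 2 • g (γ • x + γ • h) + g (γ • x)‖ / ‖γ • h‖ ^ s) := by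
        rw [← ENNReal.ofReal_mul hc]; exact ENNReal.ofReal_le_ofReal hquot
    _ ≤ _ := by
        refine mul_le_mul_right ?_ _
        refine le_iSup_of_le (γ • x) <| le_iSup_of_le (γ • h) <|
          le_iSup_of_le (smul_ne_zero hγ0.ne' hh) <| le_iSup_of_le (hUV hx) ?_
        rw [← hadd, ← hadd₂]
        exact le_iSup_of_le (hUV hxh) <| le_iSup_of_le (hUV hx2h) le_rfl

theorem zygBase_le_of_eq_smul_comp_smul {s : ℝ} (hc : 0 ≤ c) (hγ0 : 0 < γ) (hγ1 : γ ≤ 1)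
    (hs : 0 ≤ s) (hUV : MapsTo (γ • ·) U V) (hG : ∀ x ∈ U, G x = c • g (γ • x)) :
    zygBase s U G ≤ ENNReal.ofReal c * zygBase s V g := by
  rw [zygBase, zygBase, mul_add]
  exact add_le_add (holderNorm_le_of_eq_smul_comp_smul hc hγ0 hγ1 (by positivity) hUV hG)
    (secondDiff_le_of_eq_smul_comp_smul hc hγ0 hγ1 hs hUV hG)

end ZygBaseScaling

section Lipschitz

variable {E F : Type*} [NormedAddCommGroup E] [NormedAddCommGroup F]

theorem zygBase_iteratedFDerivWithin_zero [NormedSpace ℝ E] [NormedSpace ℝ F] (s : ℝ) (Ω : Set E)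
    (g : E → F) :
    zygBase s Ω (iteratedFDerivWithin ℝ 0 g Ω) = zygBase s Ω g := by
  simp only [zygBase, holderNorm, secondDiff, iteratedFDerivWithin_zero_eq_comp,
    Function.comp_apply, ← map_sub, ← map_nsmul, ← map_add, LinearIsometryEquiv.norm_map]

theorem ofReal_norm_le_zygBase {s : ℝ} {Ω : Set E} {g : E → F} {x : E} (hx : x ∈ Ω) :
    ENNReal.ofReal ‖g x‖ ≤ zygBase s Ω g :=
  (le_iSup₂ (f := fun y (_ : y ∈ Ω) => ENNReal.ofReal ‖g y‖) x hx).trans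
    (le_self_add.trans le_self_add)

variable {G : E → F} {K : NNReal} {R : ℝ}

theorem norm_sub_lt_of_mem_ball {x y : E} (hx : x ∈ ball (0 : E) R) (hy : y ∈ ball (0 : E) R) :
    ‖x - y‖ < 2 * R := by
  have := norm_sub_le x y
  rw [mem_ball_zero_iff] at hx hy
  linarith

theorem holderNorm_ball_le_of_lipschitzOnWith {σ : ℝ} (hR : 1 ≤ 2 * R) (hσ0 : 0 ≤ σ)
    (hσ1 : σ ≤ 1) (hG : LipschitzOnWith K G (ball 0 R)) (hG0 : G 0 = 0) :
    holderNorm σ (ball (0 : E) R) G ≤ ENNReal.ofReal (3 * R * K) := by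
  have hR0 : 0 < R := by linarith
  have hsup : ⨆ x ∈ ball (0 : E) R, ENNReal.ofReal ‖G x‖ ≤ ENNReal.ofReal (R * K) := by
    refine iSup₂_le fun x hx => ENNReal.ofReal_le_ofReal ?_
    have := hG.norm_sub_le hx (mem_ball_self hR0)
    rw [hG0, sub_zero, sub_zero] at this
    nlinarith [mem_ball_zero_iff.1 hx, K.coe_nonneg]
  have hquot : ⨆ (x ∈ ball (0 : E) R) (y ∈ ball (0 : E) R) (_ : x ≠ y),
      ENNReal.ofReal (‖G x - G y‖ / ‖x - y‖ ^ σ) ≤ ENNReal.ofReal (K * (2 * R)) := by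
    simp only [iSup_le_iff]
    intro x hx y hy hxy
    exact ENNReal.ofReal_le_ofReal <| div_rpow_le_of_le_mul K.2 (hG.norm_sub_le hx hy)
      (norm_sub_pos_iff.2 hxy) (norm_sub_lt_of_mem_ball hx hy).le hR hσ0 hσ1
  calc holderNorm σ (ball (0 : E) R) G ≤ ENNReal.ofReal (R * K) + ENNReal.ofReal (K * (2 * R)) :=
        add_le_add hsup hquot
    _ = ENNReal.ofReal (3 * R * K) := by
        rw [← ENNReal.ofReal_add (by positivity) (by positivity)]; ring_nf

theorem norm_secondDiff_le_of_lipschitzOnWith {U : Set E} (hG : LipschitzOnWith K G U) {x h : E}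
    (hx : x ∈ U) (hxh : x + h ∈ U) (hx2h : x + 2 • h ∈ U) :
    ‖G (x + 2 • h) - 2 • G (x + h) + G x‖ ≤ 2 * K * ‖h‖ := by
  have hsplit : G (x + 2 • h) - 2 • G (x + h) + G x =
      (G (x + 2 • h) - G (x + h)) + (G x - G (x + h)) := by
    rw [two_nsmul]; abel
  calc ‖G (x + 2 • h) - 2 • G (x + h) + G x‖
      ≤ ‖G (x + 2 • h) - G (x + h)‖ + ‖G x - G (x + h)‖ := hsplit ▸ norm_add_le _ _
    _ ≤ K * ‖(x + 2 • h) - (x + h)‖ + K * ‖x - (x + h)‖ :=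
        add_le_add (hG.norm_sub_le hx2h hxh) (hG.norm_sub_le hx hxh)
    _ = 2 * K * ‖h‖ := by
        rw [two_nsmul, add_sub_add_left_eq_sub, add_sub_cancel_right, sub_add_cancel_left,
          norm_neg]; ring

theorem secondDiff_ball_le_of_lipschitzOnWith {s : ℝ} (hR : 1 ≤ 2 * R) (hs0 : 0 ≤ s)
    (hs1 : s ≤ 1) (hG : LipschitzOnWith K G (ball 0 R)) :
    secondDiff s (ball (0 : E) R) G ≤ ENNReal.ofReal (4 * R * K) := by
  rw [secondDiff]
  simp only [iSup_le_iff]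
  intro x h hh hx hxh _
  have hhR : ‖h‖ < 2 * R := by simpa using norm_sub_lt_of_mem_ball hxh hx
  refine ENNReal.ofReal_le_ofReal ?_
  calc _ ≤ 2 * K * (2 * R) := div_rpow_le_of_le_mul (by positivity)
          (norm_secondDiff_le_of_lipschitzOnWith hG hx hxh ‹_›) (norm_pos_iff.2 hh) hhR.le hR
          hs0 hs1
    _ = 4 * R * K := by ring

theorem zygBase_ball_le_of_lipschitzOnWith {s : ℝ} (hR : 1 ≤ 2 * R) (hs0 : 0 ≤ s)
    (hs1 : s ≤ 1) (hG : LipschitzOnWith K G (ball 0 R)) (hG0 : G 0 = 0) :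
    zygBase s (ball (0 : E) R) G ≤ ENNReal.ofReal (7 * R * K) := by
  have hR0 : 0 < R := by linarith
  calc zygBase s (ball (0 : E) R) G ≤ ENNReal.ofReal (3 * R * K) + ENNReal.ofReal (4 * R * K) :=
        add_le_add (holderNorm_ball_le_of_lipschitzOnWith hR (by positivity) (by linarith) hG hG0)
          (secondDiff_ball_le_of_lipschitzOnWith hR hs0 hs1 hG)
    _ = ENNReal.ofReal (7 * R * K) := by
        rw [← ENNReal.ofReal_add (by positivity) (by positivity)]; ring_nf

end Lipschitz

section ZygmundSpace

variable {E F : Type*} [NormedAddCommGroup E] [NormedSpace ℝ E]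
  [NormedAddCommGroup F] [NormedSpace ℝ F] {Ω : Set E} {f : E → F}

theorem Nat.ceil_natCast_add_of_pos_of_le_one {m : ℕ} {s : ℝ} (hs0 : 0 < s) (hs1 : s ≤ 1) :
    ⌈(m : ℝ) + s⌉₊ = m + 1 := by
  rw [Nat.ceil_eq_iff m.succ_ne_zero, Nat.succ_sub_one]
  push_cast
  constructor <;> linarith

theorem zygNorm_natCast_add {m : ℕ} {s : ℝ} (hs0 : 0 < s) (hs1 : s ≤ 1) :
    zygNorm (m + s) Ω f =
      ∑ i ∈ Finset.range (m + 1), zygBase s Ω (iteratedFDerivWithin ℝ i f Ω) := by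
  rw [zygNorm, Nat.ceil_natCast_add_of_pos_of_le_one hs0 hs1, Nat.add_sub_cancel,
    add_sub_cancel_left]

theorem MemZyg.contDiffOn_natCast_add {m : ℕ} {s : ℝ} (hs0 : 0 < s) (hs1 : s ≤ 1)
    (hf : MemZyg (m + s) Ω f) : ContDiffOn ℝ m f Ω := by
  simpa [Nat.ceil_natCast_add_of_pos_of_le_one hs0 hs1] using hf.1

theorem ofReal_norm_iteratedFDerivWithin_le_zygNorm {s : ℝ} {i : ℕ} (hi : i < ⌈s⌉₊) {x : E}
    (hx : x ∈ Ω) : ENNReal.ofReal ‖iteratedFDerivWithin ℝ i f Ω x‖ ≤ zygNorm s Ω f :=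
  (ofReal_norm_le_zygBase hx).trans <| Finset.single_le_sum
    (f := fun j => zygBase (s - (⌈s⌉₊ - 1 : ℕ)) Ω (iteratedFDerivWithin ℝ j f Ω))
    (fun _ _ => zero_le) (Finset.mem_range.2 hi)

theorem MemZyg.lipschitzOnWith {s : ℝ} (hs : 1 < s) (hf : MemZyg s Ω f) (hΩ : IsOpen Ω)
    (hΩc : Convex ℝ Ω) : LipschitzOnWith (zygNorm s Ω f).toNNReal f Ω := by
  have hceil : 1 < ⌈s⌉₊ := Nat.lt_ceil.2 (by exact_mod_cast hs)
  refine hΩc.lipschitzOnWith_of_nnnorm_fderivWithin_le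
    (hf.1.differentiableOn (by norm_cast; omega)) fun x hx => ?_
  rw [← NNReal.coe_le_coe, coe_nnnorm, ENNReal.coe_toNNReal_eq_toReal,
    ← norm_iteratedFDerivWithin_one f (hΩ.uniqueDiffOn x hx)]
  exact (ENNReal.ofReal_le_iff_le_toReal hf.2).1
    (ofReal_norm_iteratedFDerivWithin_le_zygNorm hceil hx)

end ZygmundSpace

section Rescaling

variable {E F : Type*} [NormedAddCommGroup E] [NormedSpace ℝ E]
  [NormedAddCommGroup F] [NormedSpace ℝ F] {f : E → F} {V : Set E} {γ s : ℝ}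

theorem mapsTo_smul_ball_zero {R η : ℝ} (hγ : 0 < γ) (h : γ * R ≤ η) :
    MapsTo (γ • ·) (ball (0 : E) R) (ball 0 η) := fun x hx => by
  rw [mem_ball_zero_iff] at hx ⊢
  rw [norm_smul, Real.norm_of_nonneg hγ.le]
  nlinarith

theorem zygBase_iteratedFDerivWithin_comp_smul_le {U : Set E} (hU : IsOpen U) (hV : IsOpen V)
    (hγ0 : 0 < γ) (hγ1 : γ ≤ 1) (hs : 0 ≤ s) (hUV : MapsTo (γ • ·) U V) {N : ℕ∞}
    (hf : ContDiffOn ℝ N f V) {i : ℕ} (hi : 1 ≤ i) (hiN : i ≤ N) :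
    zygBase s U (iteratedFDerivWithin ℝ i (fun t => f (γ • t)) U) ≤
      ENNReal.ofReal γ * zygBase s V (iteratedFDerivWithin ℝ i f V) :=
  (zygBase_le_of_eq_smul_comp_smul (pow_nonneg hγ0.le i) hγ0 hγ1 hs hUV
    fun _ hx => iteratedFDerivWithin_comp_smul hU hV hUV hf hiN hx).trans <|
    mul_le_mul_left (ENNReal.ofReal_le_ofReal <|
      pow_le_of_le_one hγ0.le hγ1 (Nat.one_le_iff_ne_zero.1 hi)) _

theorem sum_zygBase_iteratedFDerivWithin_comp_smul_le {U : Set E} (hU : IsOpen U)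
    (hV : IsOpen V) (hγ0 : 0 < γ) (hγ1 : γ ≤ 1) (hs : 0 ≤ s) (hUV : MapsTo (γ • ·) U V)
    {m : ℕ} (hf : ContDiffOn ℝ m f V) :
    ∑ i ∈ Finset.range m, zygBase s U (iteratedFDerivWithin ℝ (i + 1) (fun t => f (γ • t)) U) ≤
      ENNReal.ofReal γ *
        ∑ i ∈ Finset.range (m + 1), zygBase s V (iteratedFDerivWithin ℝ i f V) := by
  rw [Finset.sum_range_succ', mul_add, Finset.mul_sum]
  refine le_add_right (Finset.sum_le_sum fun i hi => ?_)
  exact zygBase_iteratedFDerivWithin_comp_smul_le hU hV hγ0 hγ1 hs hUV hf (Nat.le_add_left 1 i)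
    (by exact_mod_cast Finset.mem_range.1 hi)

theorem zygBase_comp_smul_ball_le {K : NNReal} {R : ℝ} (hR : 1 ≤ 2 * R) (hγ : 0 ≤ γ)
    (hs0 : 0 ≤ s) (hs1 : s ≤ 1) (hf : LipschitzOnWith K f V)
    (hUV : MapsTo (γ • ·) (ball (0 : E) R) V) (hf0 : f 0 = 0) :
    zygBase s (ball (0 : E) R) (iteratedFDerivWithin ℝ 0 (fun t => f (γ • t)) (ball 0 R)) ≤
      ENNReal.ofReal (7 * R * γ) * K := by
  have hlip : LipschitzOnWith (K * ‖γ‖₊) (fun t => f (γ • t)) (ball 0 R) :=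
    hf.comp (lipschitzWith_smul γ).lipschitzOnWith hUV
  rw [zygBase_iteratedFDerivWithin_zero]
  refine (zygBase_ball_le_of_lipschitzOnWith hR hs0 hs1 hlip (by simpa using hf0)).trans_eq ?_
  have hconst : 7 * R * ((K * ‖γ‖₊ : NNReal) : ℝ) = 7 * R * γ * K := by
    push_cast [coe_nnnorm, Real.norm_of_nonneg hγ]; ring
  rw [hconst, ENNReal.ofReal_mul' K.coe_nonneg, ENNReal.ofReal_coe_nnreal]

end Rescaling

theorem zygmund_scaling_general (n m : ℕ) (hm : 1 ≤ m) (s η₁ γ : ℝ)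
    (hs0 : 0 < s) (hs1 : s ≤ 1)
    (hγ0 : 0 < γ) (hγ : γ ≤ min (η₁ / 5) 1)
    (f : EuclideanSpace ℝ (Fin n) → ℝ)
    (hf : MemZyg (m + s) (ball (0 : EuclideanSpace ℝ (Fin n)) η₁) f)
    (hf0 : f 0 = 0) :
    zygNorm (m + s) (ball (0 : EuclideanSpace ℝ (Fin n)) 5) (fun t => f (γ • t)) ≤
      ENNReal.ofReal (91 * γ) *
        zygNorm (m + s) (ball (0 : EuclideanSpace ℝ (Fin n)) η₁) f := by
  set U := ball (0 : EuclideanSpace ℝ (Fin n)) 5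
  set V := ball (0 : EuclideanSpace ℝ (Fin n)) η₁
  have hγ1 : γ ≤ 1 := hγ.trans (min_le_right _ _)
  have hUV : MapsTo (γ • ·) U V :=
    mapsTo_smul_ball_zero hγ0 (by linarith [hγ.trans (min_le_left _ _)])
  have hhigher := sum_zygBase_iteratedFDerivWithin_comp_smul_le isOpen_ball isOpen_ball hγ0 hγ1
    hs0.le hUV (hf.contDiffOn_natCast_add hs0 hs1)
  rw [← zygNorm_natCast_add hs0 hs1] at hhigher
  have hlip := hf.lipschitzOnWith (by linarith [show (1 : ℝ) ≤ m by exact_mod_cast hm])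
    isOpen_ball (convex_ball 0 η₁)
  have hzero := zygBase_comp_smul_ball_le (R := 5) (by norm_num) hγ0.le hs0.le hs1 hlip hUV hf0
  rw [ENNReal.coe_toNNReal hf.2] at hzero
  calc zygNorm (m + s) U (fun t => f (γ • t))
      = ∑ i ∈ Finset.range m, zygBase s U (iteratedFDerivWithin ℝ (i + 1) (fun t => f (γ • t)) U) +
          zygBase s U (iteratedFDerivWithin ℝ 0 (fun t => f (γ • t)) U) := by
        rw [zygNorm_natCast_add hs0 hs1, Finset.sum_range_succ']
    _ ≤ ENNReal.ofReal γ * zygNorm (m + s) V f + ENNReal.ofReal (7 * 5 * γ) * zygNorm (m + s) V f :=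
        add_le_add hhigher hzero
    _ = ENNReal.ofReal (36 * γ) * zygNorm (m + s) V f := by
        rw [← add_mul, ← ENNReal.ofReal_add hγ0.le (by positivity)]; ring_nf
    _ ≤ ENNReal.ofReal (91 * γ) * zygNorm (m + s) V f := by gcongr; linarith

/-- Scaling. For `m ≥ 1`, `s ∈ (0,1]`, `f ∈ 𝒞^{m+s}(B^n(η₁))` with `f 0 = 0`,
and `γ ∈ (0, min{η₁/5, 1}]`, the rescaled function `f_γ(t) = f(γ t)` satisfies
`‖f_γ‖_{𝒞^{m+s}(B^n(5))} ≤ 91 γ ‖f‖_{𝒞^{m+s}(B^n(η₁))}`. -/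
theorem zygmund_scaling (n m : ℕ) (hm : 1 ≤ m) (s η₁ γ : ℝ)
    (hs0 : 0 < s) (hs1 : s ≤ 1) (hη₁ : 0 < η₁)
    (hγ0 : 0 < γ) (hγ : γ ≤ min (η₁ / 5) 1)
    (f : EuclideanSpace ℝ (Fin n) → ℝ)
    (hf : MemZyg (m + s) (ball (0 : EuclideanSpace ℝ (Fin n)) η₁) f)
    (hf0 : f 0 = 0) :
    zygNorm (m + s) (ball (0 : EuclideanSpace ℝ (Fin n)) 5) (fun t => f (γ • t)) ≤
      ENNReal.ofReal (91 * γ) *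
        zygNorm (m + s) (ball (0 : EuclideanSpace ℝ (Fin n)) η₁) f :=
  zygmund_scaling_general n m hm s η₁ γ hs0 hs1 hγ0 hγ f hf hf0
end
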